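/- Let g be an ergodic discrete-time Markov transition kernel on a σ-compact metric state space X with stationary distribution π, and let S be a Borel set with π(S) > 0. Then the lazy kernel of the trace of g on S equals the trace on S of the lazy kernel of g: (g^{(S)})_L = (g_L)^{(S)}. -/

import Mathlib

/-
The entrance law `H(x, ·)` of the chain into `S` equals `δ_x` on `S` and `∫ H(y, ·) g(x, dy)`
off `S`, and `H(·, A)` is the least function that is `≥ 1_A` on `S` and superharmonic off `S`.
A lazy step only repeats the current position, so the entrance laws of `g` and `g_L` solve
each other's equations and hence coincide. From `x ∈ S`, a step of the trace of `g_L` is then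
`½ ∫ H(y, ·) g(x, dy) + ½ H(x, ·) = ½ ∫ H(y, ·) g(x, dy) + ½ δ_x`, a step of the lazy trace.
-/

open MeasureTheory ENNReal

noncomputable section

namespace MixHit

variable {X : Type*} [MeasurableSpace X]

/-- Total variation distance between two Borel measures. -/
def tv (μ ν : Measure X) : ℝ≥0∞ :=
  ⨆ (A : Set X) (_ : MeasurableSet A), (μ A - ν A) ⊔ (ν A - μ A)

/-- `g` is a Markov transition kernel: each `g x` is a (Borel) probability measure,
measurably in `x`. -/
def IsMarkov (g : X → Measure X) : Prop :=
  (∀ x, IsProbabilityMeasure (g x)) ∧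
    ∀ A : Set X, MeasurableSet A → Measurable fun x => g x A

/-- `t`-step transition probabilities (`iterK g 0 x = δ_x`). -/
def iterK (g : X → Measure X) : ℕ → X → Measure X
  | 0 => fun x => Measure.dirac x
  | n + 1 => fun x => (g x).bind (iterK g n)

/-- `π` is a stationary distribution for `g`. -/
def Stationary (g : X → Measure X) (π : Measure X) : Prop :=
  ∀ A : Set X, MeasurableSet A → ∫⁻ x, g x A ∂π = π A

/-- `g` is reversible with respect to `π`. -/
def Reversible (g : X → Measure X) (π : Measure X) : Prop :=
  ∀ A B : Set X, MeasurableSet A → MeasurableSet B →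
    ∫⁻ x in A, g x B ∂π = ∫⁻ x in B, g x A ∂π

/-- The lazy kernel `g_L(x,·) = (1/2) g(x,·) + (1/2) δ_x`. -/
def lazy (g : X → Measure X) : X → Measure X := fun x =>
  (2 : ℝ≥0∞)⁻¹ • g x + (2 : ℝ≥0∞)⁻¹ • Measure.dirac x

/-- Mixing time `min {t : sup_x ‖g^t(x,·) − π‖ ≤ ε}`, as an element of `ℝ≥0∞`
(`⊤` if there is no such `t`). -/
def mixTime (g : X → Measure X) (π : Measure X) (ε : ℝ≥0∞) : ℝ≥0∞ :=
  ⨅ (t : ℕ) (_ : ∀ x, tv (iterK g t x) π ≤ ε), (t : ℝ≥0∞)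

/-- `d̄(t) = sup_{x,y} ‖g^t(x,·) − g^t(y,·)‖`. -/
def dbar (g : X → Measure X) (t : ℕ) : ℝ≥0∞ :=
  ⨆ (x : X) (y : X), tv (iterK g t x) (iterK g t y)

/-- Standardized mixing time `min {t : d̄(t) ≤ ε}` (`⊤` if there is no such `t`). -/
def stdMix (g : X → Measure X) (ε : ℝ≥0∞) : ℝ≥0∞ :=
  ⨅ (t : ℕ) (_ : dbar g t ≤ ε), (t : ℝ≥0∞)

/-- `P_x(τ_A = t)` for the chain with kernel `g` started at `x`, where
`τ_A = min {t : X_t ∈ A}` (first-step recursion). -/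
def hitEq (g : X → Measure X) (A : Set X) : ℕ → X → ℝ≥0∞
  | 0 => fun x => A.indicator (fun _ => 1) x
  | n + 1 => fun x => Aᶜ.indicator (fun x' => ∫⁻ y, hitEq g A n y ∂(g x')) x

/-- `P_x(τ_A ≤ t)`. -/
def hitLE (g : X → Measure X) (A : Set X) (t : ℕ) (x : X) : ℝ≥0∞ :=
  ∑ s ∈ Finset.range (t + 1), hitEq g A s x

/-- `E_x[τ_A] = ∑_{t ≥ 0} P_x(τ_A > t)`. -/
def expHit (g : X → Measure X) (A : Set X) (x : X) : ℝ≥0∞ :=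
  ∑' t : ℕ, (1 - hitLE g A t x)

/-- Maximum hitting time `t_H(α) = sup {E_x[τ_A] : x ∈ X, A Borel, π(A) ≥ α}`. -/
def maxHit (g : X → Measure X) (π : Measure X) (α : ℝ) : ℝ≥0∞ :=
  ⨆ (x : X) (A : Set X) (_ : MeasurableSet A) (_ : ENNReal.ofReal α ≤ π A),
    expHit g A x

/-- Large hitting time
`τ_g(α) = min {t : inf {P_x(τ_A ≤ t) : x ∈ X, A Borel, π(A) ≥ α} > 0.9}`. -/
def largeHit (g : X → Measure X) (π : Measure X) (α : ℝ) : ℝ≥0∞ :=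
  ⨅ (t : ℕ) (_ : (9 / 10 : ℝ≥0∞) <
      ⨅ (x : X) (A : Set X) (_ : MeasurableSet A) (_ : ENNReal.ofReal α ≤ π A),
        hitLE g A t x),
    (t : ℝ≥0∞)

/-- The strong Feller property: continuity of `x ↦ g(x,·)` in total variation. -/
def StrongFeller [PseudoMetricSpace X] (g : X → Measure X) : Prop :=
  ∀ x : X, ∀ ε : ℝ, 0 < ε → ∃ δ : ℝ, 0 < δ ∧
    ∀ y : X, dist y x < δ → tv (g x) (g y) < ENNReal.ofReal ε

/-- Law of `X_t` on the event that `t` is the first time the chain lies in `S`. -/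
def enterDist (g : X → Measure X) (S : Set X) : ℕ → X → Measure X
  | 0 => fun x => (Measure.dirac x).restrict S
  | n + 1 => fun x => Sᶜ.indicator (fun x' => (g x').bind (enterDist g S n)) x

/-- Law of the chain's position at its first entrance (at a time `≥ 0`) into `S`. -/
def hitMeasure (g : X → Measure X) (S : Set X) (x : X) : Measure X :=
  Measure.sum fun t => enterDist g S t x

/-- One step of the trace of `g` on `S`: take one `g`-step, then run until the
first entrance into `S`. -/
def traceK (g : X → Measure X) (S : Set X) : X → Measure X :=
  fun x => (g x).bind (hitMeasure g S)

/-- The trace of `g` on `S`, viewed as a kernel on the subtype `S`. -/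
def traceSub (g : X → Measure X) (S : Set X) : S → Measure S :=
  fun x => (traceK g S (x : X)).comap (Subtype.val)

/-- Normalization of `π` to `S`, as a measure on the subtype `S`. -/
def normSub (π : Measure X) (S : Set X) : Measure S :=
  (π S)⁻¹ • π.comap (Subtype.val : S → X)

/-- Ergodicity: from every starting point, the chain converges to `π`
in total variation. -/
def ErgodicK (g : X → Measure X) (π : Measure X) : Prop :=
  Stationary g π ∧
    ∀ x : X, Filter.Tendsto (fun t => tv (iterK g t x) π) Filter.atTop (nhds 0)

section

variable {g k : X → Measure X} {S A : Set X}

theorem IsMarkov.measurable (hg : IsMarkov g) : Measurable g :=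
  Measure.measurable_of_measurable_coe _ hg.2

theorem lazy_apply (g : X → Measure X) (x : X) (hA : MeasurableSet A) :
    lazy g x A = 2⁻¹ * g x A + 2⁻¹ * A.indicator 1 x := by
  simp [lazy, Measure.dirac_apply' x hA]

theorem lintegral_lazy (g : X → Measure X) (x : X) {f : X → ℝ≥0∞} (hf : Measurable f) :
    ∫⁻ z, f z ∂lazy g x = 2⁻¹ * ∫⁻ z, f z ∂g x + 2⁻¹ * f x := by
  simp [lazy, lintegral_add_measure, lintegral_dirac' x hf]

theorem bind_lazy (g : X → Measure X) (x : X) {f : X → Measure X} (hf : Measurable f) :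
    (lazy g x).bind f = (2 : ℝ≥0∞)⁻¹ • (g x).bind f + (2 : ℝ≥0∞)⁻¹ • f x := by
  ext A hA
  rw [Measure.bind_apply hA hf.aemeasurable,
    lintegral_lazy g x (f := fun z => f z A) (Measure.measurable_coe hA |>.comp hf),
    Measure.add_apply, Measure.smul_apply, Measure.smul_apply,
    Measure.bind_apply hA hf.aemeasurable]
  rfl

theorem IsMarkov.lazy (hg : IsMarkov g) : IsMarkov (lazy g) := by
  refine ⟨fun x => ⟨?_⟩, fun A hA => ?_⟩
  · have := hg.1 x
    simp [lazy_apply g x MeasurableSet.univ, ENNReal.inv_two_add_inv_two]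
  · simp only [lazy_apply g _ hA]
    exact ((hg.2 A hA).const_mul _).add ((measurable_const.indicator hA).const_mul _)

theorem enterDist_zero_of_mem (hS : MeasurableSet S) {x : X} (hx : x ∈ S) :
    enterDist k S 0 x = Measure.dirac x := by
  classical
  simp [enterDist, restrict_dirac' hS, hx]

theorem enterDist_zero_of_notMem (hS : MeasurableSet S) {x : X} (hx : x ∉ S) :
    enterDist k S 0 x = 0 := by
  classical
  simp [enterDist, restrict_dirac' hS, hx]

theorem enterDist_succ_of_mem {x : X} (hx : x ∈ S) (n : ℕ) : enterDist k S (n + 1) x = 0 := by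
  simp [enterDist, hx]

theorem enterDist_succ_of_notMem {x : X} (hx : x ∉ S) (n : ℕ) :
    enterDist k S (n + 1) x = (k x).bind (enterDist k S n) := by
  simp [enterDist, hx]

theorem measurable_enterDist (hS : MeasurableSet S) (hk : Measurable k) :
    ∀ n, Measurable (enterDist k S n)
  | 0 => by
      refine Measure.measurable_of_measurable_coe _ fun A hA => ?_
      simp only [enterDist, Measure.restrict_apply hA]
      exact Measure.measurable_coe (hA.inter hS) |>.comp Measure.measurable_dirac
  | n + 1 =>
      ((Measure.measurable_bind' (measurable_enterDist hS hk n)).comp hk).indicator hS.compl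

theorem measurable_hitMeasure (hS : MeasurableSet S) (hk : Measurable k) :
    Measurable (hitMeasure k S) := by
  refine Measure.measurable_of_measurable_coe _ fun A hA => ?_
  simp only [hitMeasure, Measure.sum_apply _ hA]
  exact Measurable.tsum fun t =>
    Measure.measurable_coe hA |>.comp (measurable_enterDist hS hk t)

theorem hitMeasure_of_mem (hS : MeasurableSet S) {x : X} (hx : x ∈ S) :
    hitMeasure k S x = Measure.dirac x := by
  ext A hA
  rw [hitMeasure, Measure.sum_apply _ hA, tsum_eq_single 0 fun t ht => ?_,
    enterDist_zero_of_mem hS hx]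
  obtain ⟨n, rfl⟩ := Nat.exists_eq_succ_of_ne_zero ht
  simp [enterDist_succ_of_mem hx]

theorem hitMeasure_of_notMem (hS : MeasurableSet S) (hk : Measurable k) {x : X} (hx : x ∉ S) :
    hitMeasure k S x = (k x).bind (hitMeasure k S) := by
  ext A hA
  have hm t : Measurable fun z => enterDist k S t z A :=
    Measure.measurable_coe hA |>.comp (measurable_enterDist hS hk t)
  rw [Measure.bind_apply hA (measurable_hitMeasure hS hk).aemeasurable, hitMeasure,
    Measure.sum_apply _ hA, tsum_eq_zero_add' ENNReal.summable]
  simp only [enterDist_zero_of_notMem hS hx, enterDist_succ_of_notMem hx,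
    Measure.bind_apply hA (measurable_enterDist hS hk _).aemeasurable, Measure.coe_zero,
    Pi.zero_apply, zero_add, hitMeasure, Measure.sum_apply _ hA]
  exact (lintegral_tsum fun t => (hm t).aemeasurable).symm

theorem hitMeasure_apply_of_mem (hS : MeasurableSet S) (hA : MeasurableSet A) {x : X}
    (hx : x ∈ S) : hitMeasure k S x A = A.indicator 1 x := by
  rw [hitMeasure_of_mem hS hx, Measure.dirac_apply' x hA]

theorem hitMeasure_apply_of_notMem (hS : MeasurableSet S) (hk : Measurable k)
    (hA : MeasurableSet A) {x : X} (hx : x ∉ S) :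
    hitMeasure k S x A = ∫⁻ z, hitMeasure k S z A ∂k x := by
  rw [hitMeasure_of_notMem hS hk hx,
    Measure.bind_apply hA (measurable_hitMeasure hS hk).aemeasurable]

theorem hitMeasure_apply_le_of_superharmonic (hS : MeasurableSet S) (hk : Measurable k)
    (hA : MeasurableSet A) {K : X → ℝ≥0∞} (hK_mem : ∀ z ∈ S, A.indicator 1 z ≤ K z)
    (hK_notMem : ∀ y ∉ S, ∫⁻ z, K z ∂k y ≤ K y) (x : X) :
    hitMeasure k S x A ≤ K x := by
  have hm t : Measurable fun z => enterDist k S t z A :=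
    Measure.measurable_coe hA |>.comp (measurable_enterDist hS hk t)
  have partial_le : ∀ N x, ∑ t ∈ Finset.range N, enterDist k S t x A ≤ K x := by
    intro N
    induction N with
    | zero => simp
    | succ N ih =>
      intro x
      rw [Finset.sum_range_succ']
      by_cases hx : x ∈ S
      · simpa [enterDist_succ_of_mem hx, enterDist_zero_of_mem hS hx,
          Measure.dirac_apply' x hA] using hK_mem x hx
      · simp only [enterDist_succ_of_notMem hx, enterDist_zero_of_notMem hS hx,
          Measure.bind_apply hA (measurable_enterDist hS hk _).aemeasurable, Measure.coe_zero,
          Pi.zero_apply, add_zero]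
        rw [← lintegral_finsetSum _ fun t _ => hm t]
        exact (lintegral_mono fun z => ih z).trans (hK_notMem x hx)
  rw [hitMeasure, Measure.sum_apply _ hA, ENNReal.tsum_eq_iSup_nat]
  exact iSup_le fun N => partial_le N x

theorem hitMeasure_apply_le_one (hS : MeasurableSet S) (hk : IsMarkov k) (hA : MeasurableSet A)
    (x : X) : hitMeasure k S x A ≤ 1 := by
  refine hitMeasure_apply_le_of_superharmonic (K := 1) hS hk.measurable hA (fun z _ => ?_)
    (fun y _ => ?_) x
  · exact Set.indicator_le_self' (fun _ _ => zero_le_one) z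
  · have := hk.1 y
    simp

theorem eq_of_eq_inv_two_mul_add {a b : ℝ≥0∞} (ha : a ≠ ⊤) (h : a = 2⁻¹ * b + 2⁻¹ * a) :
    a = b := by
  have hhalf : 2⁻¹ * a + 2⁻¹ * a = 2⁻¹ * b + 2⁻¹ * a := by
    rw [← add_mul, ENNReal.inv_two_add_inv_two, one_mul, ← h]
  have := WithTop.add_right_cancel (ENNReal.mul_ne_top (by simp) ha) hhalf
  exact (ENNReal.mul_right_inj (by simp) (by simp)).1 this

theorem hitMeasure_lazy (hS : MeasurableSet S) (hg : IsMarkov g) :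
    hitMeasure (lazy g) S = hitMeasure g S := by
  have hlg := hg.lazy
  funext x
  ext A hA
  have hH : Measurable fun z => hitMeasure g S z A :=
    Measure.measurable_coe hA |>.comp (measurable_hitMeasure hS hg.measurable)
  have hH' : Measurable fun z => hitMeasure (lazy g) S z A :=
    Measure.measurable_coe hA |>.comp (measurable_hitMeasure hS hlg.measurable)
  have hK_mem {k : X → Measure X} (z : X) (hz : z ∈ S) :
      A.indicator 1 z ≤ hitMeasure k S z A :=
    (hitMeasure_apply_of_mem hS hA hz).ge
  apply le_antisymm
  · refine hitMeasure_apply_le_of_superharmonic hS hlg.measurable hA hK_mem (fun y hy => ?_) x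
    rw [lintegral_lazy g y hH, ← hitMeasure_apply_of_notMem hS hg.measurable hA hy, ← add_mul,
      ENNReal.inv_two_add_inv_two, one_mul]
  · refine hitMeasure_apply_le_of_superharmonic hS hg.measurable hA hK_mem (fun y hy => ?_) x
    have hfin := (hitMeasure_apply_le_one hS hlg hA y).trans_lt ENNReal.one_lt_top
    refine (eq_of_eq_inv_two_mul_add hfin.ne ?_).ge
    rw [← lintegral_lazy g y hH', ← hitMeasure_apply_of_notMem hS hlg.measurable hA hy]

end

theorem stmt18_general {X : Type*} [MeasurableSpace X] (g : X → Measure X) (hg : IsMarkov g)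
    (S : Set X) (hS : MeasurableSet S) :
    ∀ x ∈ S, lazy (traceK g S) x = traceK (lazy g) S x := by
  intro x hx
  rw [traceK, hitMeasure_lazy hS hg, bind_lazy g x (measurable_hitMeasure hS hg.measurable),
    hitMeasure_of_mem hS hx]
  rfl

/-- the lazy kernel of the trace equals the trace of the lazy kernel. -/
theorem stmt18 {X : Type*} [MetricSpace X] [MeasurableSpace X] [BorelSpace X]
    [SigmaCompactSpace X] (g : X → Measure X) (π : Measure X)
    (hg : IsMarkov g) (hπ : IsProbabilityMeasure π) (herg : ErgodicK g π)
    (S : Set X) (hS : MeasurableSet S) (hpos : 0 < π S) :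
    ∀ x ∈ S, lazy (traceK g S) x = traceK (lazy g) S x :=
  stmt18_general g hg S hS

end MixHit
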